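/- arXiv:2106.14398 — 12 statements merged into one kernel-verified Lean document; each statement's English description precedes it below -/
import Mathlib

section
/- Let S be a left regular band, n ≥ 1, and a_1,…,a_n, i_1,…,i_n, d ∈ S. If d ≲ a_j⊔i_j for every j = 1,…,n, then, setting i = i_1⊔i_2⊔⋯⊔i_n, we have d ≲ a_j⊔i for every j = 1,…,n. -/
/-! Write `x ⊒ y` for `op x y = x`. Associativity makes `⊒` transitive and lets `x` absorb
`y ⊔ z` once it absorbs `y` and `z`; the band laws give `y ⊔ z ⊒ y` and `y ⊔ z ⊒ z`. Hence the
fold `i` absorbs every `i_j`, so `a_j ⊔ i` absorbs `a_j` and `i_j`, hence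
`a_j ⊔ i ⊒ a_j ⊔ i_j ⊒ d`. -/

section LeftRegularBand

variable {S : Type*} (op : S → S → S)

lemma absorbs_trans (assoc : ∀ a b c, op a (op b c) = op (op a b) c)
    {x y z : S} (hxy : op x y = x) (hyz : op y z = y) : op x z = x := by
  rw [← hxy, ← assoc, hyz]

lemma absorbs_op (assoc : ∀ a b c, op a (op b c) = op (op a b) c)
    {x y z : S} (hxy : op x y = x) (hxz : op x z = x) : op x (op y z) = x := by
  rw [assoc, hxy, hxz]

lemma foldl_absorbs (assoc : ∀ a b c, op a (op b c) = op (op a b) c)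
    (idem : ∀ a, op a a = a) (lrb : ∀ a b, op a b = op (op a b) a) (l : List S) (b : S) :
    ∀ y ∈ b :: l, op (l.foldl op b) y = l.foldl op b := by
  induction l generalizing b with
  | nil => simp [idem]
  | cons hd tl ih =>
    intro y hy
    have habs_start := ih (op b hd) (op b hd) List.mem_cons_self
    rcases List.mem_cons.mp hy with rfl | hy
    · exact absorbs_trans op assoc habs_start (lrb y hd).symm
    rcases List.mem_cons.mp hy with rfl | hy
    · exact absorbs_trans op assoc habs_start (by rw [← assoc, idem])
    · exact ih (op b hd) y (List.mem_cons_of_mem _ hy)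

end LeftRegularBand

/-- Let `S` be a left regular band, `n ≥ 1` and
`a_1,…,a_n, i_1,…,i_n, d ∈ S` (indexed here by `Fin (n+1)` so that there is
at least one index).  If `d ≲ a_j ⊔ i_j` for every `j`, then, setting
`i = i_0 ⊔ i_1 ⊔ ⋯ ⊔ i_n`, we have `d ≲ a_j ⊔ i` for every `j`
(where `x ≲ y` means `y ⊔ x = y`). -/
theorem stmt_2 {S : Type*} (op : S → S → S)
    (assoc : ∀ a b c, op a (op b c) = op (op a b) c)
    (idem : ∀ a, op a a = a)
    (lrb : ∀ a b, op a b = op (op a b) a)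
    (n : ℕ) (a iv : Fin (n + 1) → S) (d : S)
    (h : ∀ j, op (op (a j) (iv j)) d = op (a j) (iv j)) :
    ∀ j, op (op (a j) ((List.ofFn fun k : Fin n => iv k.succ).foldl op (iv 0))) d
        = op (a j) ((List.ofFn fun k : Fin n => iv k.succ).foldl op (iv 0)) := by
  set l := List.ofFn fun k : Fin n => iv k.succ
  have hfold : ∀ j, op (l.foldl op (iv 0)) (iv j) = l.foldl op (iv 0) := by
    refine Fin.cases ?_ fun k => ?_
    · exact foldl_absorbs op assoc idem lrb l (iv 0) (iv 0) List.mem_cons_self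
    · exact foldl_absorbs op assoc idem lrb l (iv 0) (iv k.succ)
        (List.mem_cons_of_mem _ (List.mem_ofFn.mpr ⟨k, rfl⟩))
  intro j
  have habs_a : op (op (a j) (l.foldl op (iv 0))) (a j) = op (a j) (l.foldl op (iv 0)) :=
    (lrb _ _).symm
  have habs_iv : op (op (a j) (l.foldl op (iv 0))) (iv j) = op (a j) (l.foldl op (iv 0)) := by
    rw [← assoc, hfold]
  exact absorbs_trans op assoc (absorbs_op op assoc habs_a habs_iv) (h j)
end

section
/- Let S be a left regular band, d ∈ S, and let I be a ≲-ideal of S that is relatively maximal with respect to not containing d. Then for every a ∈ S with a ∉ I there exists i ∈ I such that d ≲ a⊔i. -/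
/-- Let `S` be a left regular band, `d ∈ S`, and let `I` be a
`≲`-ideal of `S` relatively maximal with respect to not containing `d`.
Then for every `a ∉ I` there exists `i ∈ I` with `d ≲ a ⊔ i`
(where `x ≲ y` means `y ⊔ x = y`). -/
theorem stmt_3 {S : Type*} (op : S → S → S)
    (assoc : ∀ a b c, op a (op b c) = op (op a b) c)
    (idem : ∀ a, op a a = a)
    (lrb : ∀ a b, op a b = op (op a b) a)
    (I : Set S) (d : S)
    (hne : I.Nonempty)
    (hdown : ∀ a b, b ∈ I → op b a = b → a ∈ I)
    (hclosed : ∀ i j, i ∈ I → j ∈ I → op i j ∈ I)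
    (hd : d ∉ I)
    (hmax : ∀ J : Set S, J.Nonempty → (∀ a b, b ∈ J → op b a = b → a ∈ J) →
      (∀ i j, i ∈ J → j ∈ J → op i j ∈ J) → I ⊂ J → d ∈ J) :
    ∀ a ∉ I, ∃ i ∈ I, op (op a i) d = op a i := by
  intro a ha
  set J : Set S := { x | ∃ i ∈ I, op (op a i) x = op a i } with hJ
  -- transitivity helper: if y ⊔ x = y and x ⊔ z = x then y ⊔ z = y
  have trans : ∀ x y z, op y x = y → op x z = x → op y z = y := by
    intro x y z h1 h2
    calc op y z = op (op y x) z := by rw [h1]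
    _ = op y (op x z) := (assoc y x z).symm
    _ = op y x := by rw [h2]
    _ = y := h1
  have hIJ : I ⊆ J := by
    intro i hi
    exact ⟨i, hi, by rw [← assoc, idem]⟩
  obtain ⟨i0, hi0⟩ := hne
  have haJ : a ∈ J := ⟨i0, hi0, (lrb a i0).symm⟩
  have hJne : J.Nonempty := ⟨a, haJ⟩
  have hJdown : ∀ x b, b ∈ J → op b x = b → x ∈ J := by
    rintro x b ⟨i, hi, hb⟩ hbx
    exact ⟨i, hi, trans b (op a i) x hb hbx⟩
  have hJclosed : ∀ x y, x ∈ J → y ∈ J → op x y ∈ J := by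
    rintro x y ⟨u, hu, hx⟩ ⟨v, hv, hy⟩
    refine ⟨op u v, hclosed u v hu hv, ?_⟩
    have hauv : op a (op u v) = op (op a u) v := assoc a u v
    have h1 : op (op a (op u v)) x = op a (op u v) := by
      rw [hauv]
      refine trans (op a u) (op (op a u) v) x ?_ hx
      exact (lrb (op a u) v).symm
    have h2 : op (op a (op u v)) y = op a (op u v) := by
      rw [hauv]
      refine trans (op a v) (op (op a u) v) y ?_ hy
      -- (a⊔u⊔v) ⊔ (a⊔v) = a⊔u⊔v
      have e1 : op (op (op a u) v) a = op (op a u) v := by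
        have := lrb a (op u v)
        rw [assoc] at this
        exact this.symm
      calc op (op (op a u) v) (op a v)
          = op (op (op (op a u) v) a) v := by rw [assoc]
        _ = op (op (op a u) v) v := by rw [e1]
        _ = op (op a u) (op v v) := by rw [assoc]
        _ = op (op a u) v := by rw [idem]
    calc op (op a (op u v)) (op x y)
        = op (op (op a (op u v)) x) y := by rw [assoc]
      _ = op (op a (op u v)) y := by rw [h1]
      _ = op a (op u v) := h2
  have hss : I ⊂ J := ⟨hIJ, fun h => ha (h haJ)⟩
  obtain ⟨i, hi, hdi⟩ := hmax J hJne hJdown hJclosed hss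
  exact ⟨i, hi, hdi⟩
end

section
/- In every ado-semilattice (S,⊔,∩): the reduct (S,⊔) is a left regular band (⊔ is associative, idempotent, and a⊔b = (a⊔b)⊔a for all a,b), and the extended distributivity law a⊔(b∩c) = (a⊔b)∩(a⊔c) holds for all a, b, c ∈ S. -/
/-- An ado-semilattice: `(S,∩)` is a meet-semilattice; with `x ≤ y` meaning
`x∩y = x`, the four o-semilattice laws hold; `⊔` is associative; and the
distributivity law holds. -/
structure IsAdo {S : Type*} (inter ov : S → S → S) : Prop where
  inter_comm : ∀ a b, inter a b = inter b a
  inter_assoc : ∀ a b c, inter (inter a b) c = inter a (inter b c)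
  inter_idem : ∀ a, inter a a = a
  le1 : ∀ x y, inter x (ov x y) = x
  le2 : ∀ x y z, inter (ov (inter x y) (inter y z)) y = ov (inter x y) (inter y z)
  le3 : ∀ x y, inter (ov x y) (ov x (inter y (ov x y))) = ov x y
  le4 : ∀ x y z, inter (inter x z) (ov (inter x y) z) = inter x z
  ov_assoc : ∀ x y z, ov (ov x y) z = ov x (ov y z)
  distrib : ∀ a b c d,
    ov (inter a d) (inter (inter b d) (inter c d)) =
      inter (ov (inter a d) (inter b d)) (ov (inter a d) (inter c d))

/-- In every ado-semilattice `(S,⊔,∩)`, the reduct `(S,⊔)` is a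
left regular band, and extended distributivity `a⊔(b∩c) = (a⊔b)∩(a⊔c)` holds. -/
theorem stmt_4 {S : Type*} (inter ov : S → S → S) (h : IsAdo inter ov) :
    (∀ a b c, ov a (ov b c) = ov (ov a b) c) ∧
    (∀ a, ov a a = a) ∧
    (∀ a b, ov a b = ov (ov a b) a) ∧
    (∀ a b c, ov a (inter b c) = inter (ov a b) (ov a c)) := by
  letI : SemilatticeInf S :=
  { le := fun a b => inter a b = a
    le_refl := h.inter_idem
    le_trans := by
      intro a b c hab hbc
      show inter a c = a
      calc inter a c = inter (inter a b) c := by rw [hab]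
        _ = inter a (inter b c) := h.inter_assoc a b c
        _ = inter a b := by rw [hbc]
        _ = a := hab
    le_antisymm := by
      intro a b hab hba
      calc a = inter a b := hab.symm
        _ = inter b a := h.inter_comm a b
        _ = b := hba
    inf := inter
    inf_le_left := by
      intro a b
      show inter (inter a b) a = inter a b
      rw [h.inter_comm (inter a b) a, ← h.inter_assoc, h.inter_idem]
    inf_le_right := by
      intro a b
      show inter (inter a b) b = inter a b
      rw [h.inter_assoc, h.inter_idem]
    le_inf := by
      intro c a b h1 h2
      show inter c (inter a b) = c
      rw [← h.inter_assoc, h1, h2] }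
  -- basic meet facts, restated for `inter`
  have ile_l : ∀ a b : S, inter a b ≤ a := fun a b => inf_le_left
  have ile_r : ∀ a b : S, inter a b ≤ b := fun a b => inf_le_right
  have le_inf' : ∀ {c a b : S}, c ≤ a → c ≤ b → c ≤ inter a b :=
    fun h1 h2 => le_inf h1 h2
  -- left-commutativity and AC facts for `inter`
  have hlc : ∀ a b c : S, inter a (inter b c) = inter b (inter a c) := by
    intro a b c
    rw [← h.inter_assoc, h.inter_comm a b, h.inter_assoc]
  have hACd : ∀ p q d : S, inter (inter p d) (inter q d) = inter (inter p q) d := by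
    intro p q d
    apply le_antisymm
    · exact le_inf' (le_inf' (le_trans (ile_l _ _) (ile_l _ _))
        (le_trans (ile_r _ _) (ile_l _ _))) (le_trans (ile_l _ _) (ile_r _ _))
    · exact le_inf' (le_inf' (le_trans (ile_l _ _) (ile_l _ _)) (ile_r _ _))
        (le_inf' (le_trans (ile_l _ _) (ile_r _ _)) (ile_r _ _))
  have hAC2 : ∀ b p q : S, inter b (inter p q) = inter (inter b q) p := by
    intro b p q
    rw [h.inter_assoc, h.inter_comm p q]
  -- basic facts about ov
  have le1' : ∀ a b : S, a ≤ ov a b := h.le1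
  have le4' : ∀ x y z : S, inter x z ≤ ov (inter x y) z := h.le4
  have L2 : ∀ {u v y : S}, u ≤ y → v ≤ y → ov u v ≤ y := by
    intro u v y hu hv
    have hv' : inter y v = v := by rw [h.inter_comm]; exact hv
    have := h.le2 u y v
    rw [hu, hv'] at this
    exact this
  have hidem : ∀ a : S, ov a a = a :=
    fun a => le_antisymm (L2 (le_refl a) (le_refl a)) (le1' a a)
  have habs : ∀ a b : S, b ≤ a → ov a b = a :=
    fun a b hb => le_antisymm (L2 (le_refl a) hb) (le1' a b)
  have hLRB : ∀ a b : S, ov a b = ov (ov a b) a :=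
    fun a b => (habs (ov a b) a (le1' a b)).symm
  have L3 : ∀ a b : S, ov a b = ov a (inter b (ov a b)) :=
    fun a b => le_antisymm (h.le3 a b) (L2 (le1' a b) (ile_r _ _))
  -- inter (ov a b) a = a
  have eA : ∀ a b : S, inter (ov a b) a = a := by
    intro a b
    rw [h.inter_comm]; exact h.le1 a b
  -- key consequence of le4: inter (ov a b) z ≤ ov a z
  have le4A : ∀ a b z : S, inter (ov a b) z ≤ ov a z := by
    intro a b z
    have := le4' (ov a b) a z
    rwa [eA a b] at this
  -- F' : y ≤ b → a⊔(y∩(a⊔b)) = a⊔y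
  have hF : ∀ a b y : S, y ≤ b → ov a (inter y (ov a b)) = ov a y := by
    intro a b y hyb
    apply le_antisymm
    · -- ≤ : a ≤ a⊔y and y∩(a⊔b) ≤ a⊔y
      refine L2 (le1' a y) ?_
      have h1 : inter (ov a b) y ≤ ov a y := le4A a b y
      have h2 : inter y (ov a b) = inter (ov a b) y := h.inter_comm _ _
      rw [h2]; exact h1
    · -- ≥ : a⊔y = a⊔(y∩(a⊔y)) ≤ a⊔(y∩(a⊔b))
      rw [L3 a y]
      refine L2 (le1' a _) ?_
      -- m := y∩(a⊔y); show m ≤ ov a (inter y (ov a b))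
      have hm_y : inter y (ov a y) ≤ y := ile_l _ _
      have hm_oy : inter y (ov a y) ≤ ov a y := ile_r _ _
      have hm_b : inter y (ov a y) ≤ ov a b := by
        have h3 : inter (ov a y) b ≤ ov a b := le4A a y b
        have h4 : inter y (ov a y) ≤ inter (ov a y) b :=
          le_inf' hm_oy (le_trans hm_y hyb)
        exact le_trans h4 h3
      have h5 : inter (ov a y) (inter y (ov a b)) ≤ ov a (inter y (ov a b)) :=
        le4A a y _
      exact le_trans (le_inf' hm_oy (le_inf' hm_y hm_b)) h5
  -- (‡) : a⊔(b∩x) = (a⊔b) ∩ (a⊔(x∩(a⊔b)))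
  have hdag : ∀ a b x : S,
      ov a (inter b x) = inter (ov a b) (ov a (inter x (ov a b))) := by
    intro a b x
    have hd := h.distrib a b x (ov a b)
    rw [h.le1 a b] at hd
    rw [hACd b x (ov a b)] at hd
    rw [hF a b (inter b x) (ile_l b x)] at hd
    rw [← L3 a b] at hd
    exact hd
  -- J : a ≤ x → a⊔(b∩x) = (a⊔b)∩x
  have hJ : ∀ a b x : S, a ≤ x → ov a (inter b x) = inter (ov a b) x := by
    intro a b x hax
    have hxa : inter x a = a := by rw [h.inter_comm]; exact hax
    apply le_antisymm
    · refine le_inf' (L2 (le1' a b) ?_) (L2 hax (ile_r b x))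
      -- inter b x ≤ ov a b
      have h1 : inter x b ≤ ov (inter x a) b := le4' x a b
      rw [hxa] at h1
      rw [h.inter_comm b x]; exact h1
    · rw [hdag a b x]
      refine le_inf' (ile_l _ _) ?_
      -- inter (ov a b) x ≤ ov a (inter x (ov a b))
      have h2 : inter x (inter x (ov a b)) ≤ ov (inter x a) (inter x (ov a b)) :=
        le4' x a _
      rw [hxa] at h2
      have h3 : inter x (inter x (ov a b)) = inter x (ov a b) := by
        rw [← h.inter_assoc, h.inter_idem]
      rw [h3] at h2
      rw [h.inter_comm (ov a b) x]; exact h2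
  refine ⟨fun a b c => (h.ov_assoc a b c).symm, hidem, hLRB, ?_⟩
  intro a b c
  set R := inter (ov a b) (ov a c) with hR
  have haR : a ≤ R := le_inf' (le1' a b) (le1' a c)
  have haR' : inter a R = a := haR
  -- I : a⊔(b∩(a⊔c)) = R,  I' : a⊔(c∩(a⊔b)) = R
  have hI : ov a (inter b (ov a c)) = R := hJ a b (ov a c) (le1' a c)
  have hI' : ov a (inter c (ov a b)) = R := by
    rw [hJ a c (ov a b) (le1' a b), hR, h.inter_comm]
  -- step 3 : a⊔(b∩R) = R and a⊔(c∩R) = R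
  have h3b : ov a (inter b R) = R := by
    have e : inter b R = inter (inter b (ov a c)) (ov a b) := by
      rw [hR, hAC2 b (ov a b) (ov a c)]
    rw [e, hF a b (inter b (ov a c)) (ile_l b (ov a c)), hI]
  have h3c : ov a (inter c R) = R := by
    have e : inter c R = inter (inter c (ov a b)) (ov a c) := by
      rw [hR, ← h.inter_assoc]
    rw [e, hF a c (inter c (ov a b)) (ile_l c (ov a b)), hI']
  -- step 4 : R = a⊔((b∩c)∩R)
  have h4 : R = ov a (inter (inter b c) R) := by
    have hd := h.distrib a b c R
    rw [haR', hACd b c R, h3b, h3c, h.inter_idem] at hd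
    exact hd.symm
  -- step 5 : R ≤ a⊔(b∩c)
  have h5 : R ≤ ov a (inter b c) := by
    rw [h4]
    refine L2 (le1' a (inter b c)) ?_
    have hm : inter (inter b c) R ≤ inter (ov a b) (inter b c) :=
      le_inf' (le_trans (ile_r _ _) (ile_l _ _)) (ile_l _ _)
    exact le_trans hm (le4A a b (inter b c))
  -- step 6 : a⊔(b∩c) ≤ R
  have h6 : ov a (inter b c) ≤ R := by
    refine le_inf' ?_ ?_
    · rw [← hF a b (inter b c) (ile_l b c)]
      exact L2 (le1' a _) (ile_r _ _)
    · rw [← hF a c (inter b c) (ile_r b c)]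
      exact L2 (le1' a _) (ile_r _ _)
  exact le_antisymm h6 h5
end

section
/- An algebra (S,⊔,∩) is an ado-semilattice if and only if: (i) (S,⊔) is a left regular band; (ii) for all a,b ∈ S, a∩b is the greatest lower bound of a and b with respect to the partial order ≤ determined by ⊔ (where a ≤ b iff a⊔b = b); (iii) a⊔(b∩c) = (a⊔b)∩(a⊔c) for all a,b,c; and (iv) a∩c ≤ (a∩b)⊔c for all a,b,c. -/
/-- `(S,⊔,∩)` is an ado-semilattice iff (i) `(S,⊔)` is a left
regular band; (ii) `a∩b` is the greatest lower bound of `a,b` in the partial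
order determined by `⊔` (`x ≤ y ↔ x⊔y = y`); (iii) `a⊔(b∩c) = (a⊔b)∩(a⊔c)`;
and (iv) `a∩c ≤ (a∩b)⊔c`. -/
theorem stmt_5 {S : Type*} (inter ov : S → S → S) :
    IsAdo inter ov ↔
      ((∀ a b c, ov a (ov b c) = ov (ov a b) c) ∧
        (∀ a, ov a a = a) ∧
        (∀ a b, ov a b = ov (ov a b) a)) ∧
      (∀ a b, ov (inter a b) a = a ∧ ov (inter a b) b = b ∧
        ∀ c, ov c a = a → ov c b = b → ov c (inter a b) = inter a b) ∧
      (∀ a b c, ov a (inter b c) = inter (ov a b) (ov a c)) ∧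
      (∀ a b c, ov (inter a c) (ov (inter a b) c) = ov (inter a b) c) := by
  constructor
  · rintro ⟨mc, ma, mi, le1, le2, le3, le4, oa, dist⟩
    -- F2 : (q∩u)⊔u = u
    have F2 : ∀ q u, ov (inter q u) u = u := by
      intro q u
      have h2 := le2 q u u
      rw [mi] at h2
      have h4 := le4 u q u
      rw [mi, mc u q] at h4
      calc ov (inter q u) u = inter (ov (inter q u) u) u := h2.symm
        _ = inter u (ov (inter q u) u) := mc _ _
        _ = u := h4
    -- order conversions
    have leow : ∀ p q, inter p q = p → ov p q = q := by
      intro p q h; have := F2 p q; rw [h] at this; exact this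
    have owle : ∀ p q, ov p q = q → inter p q = p := by
      intro p q h; have := le1 p q; rw [h] at this; exact this
    -- ⊔ idempotent
    have oidem : ∀ x, ov x x = x := by
      intro x
      have h := mi x
      have := F2 x x; rw [h] at this; exact this
    -- F6 : (x⊔y)⊔x = x⊔y
    have F6 : ∀ x y, ov (ov x y) x = ov x y := by
      intro x y
      have h1 := le1 (ov x y) x
      have h2 := le2 (ov x y) (ov x y) x
      rw [mi] at h2
      have hx : inter (ov x y) x = x := by rw [mc]; exact le1 x y
      rw [hx] at h2
      calc ov (ov x y) x = inter (ov (ov x y) x) (ov x y) := h2.symm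
        _ = inter (ov x y) (ov (ov x y) x) := mc _ _
        _ = ov x y := h1
    -- F7 : p ≤ y → q ≤ y → p⊔q ≤ y
    have F7 : ∀ p q y, inter p y = p → inter q y = q → inter (ov p q) y = ov p q := by
      intro p q y hp hq
      have h := le2 p y q
      rw [hp, mc y q, hq] at h
      exact h
    -- F8 : a ⊔ (u ∩ (a⊔u)) = a⊔u
    have F8 : ∀ a u, ov a (inter u (ov a u)) = ov a u := by
      intro a u
      have h3 := le3 a u
      have hp : inter a (ov a u) = a := le1 a u
      have hq : inter (inter u (ov a u)) (ov a u) = inter u (ov a u) := by rw [ma, mi]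
      have h7 := F7 a (inter u (ov a u)) (ov a u) hp hq
      calc ov a (inter u (ov a u)) = inter (ov a (inter u (ov a u))) (ov a u) := h7.symm
        _ = inter (ov a u) (ov a (inter u (ov a u))) := mc _ _
        _ = ov a u := h3
    -- F9 : ⊔-antisymmetry
    have F9 : ∀ x y, ov x y = y → ov y x = x → x = y := by
      intro x y h1 h2
      calc x = ov y x := h2.symm
        _ = ov (ov x y) x := by rw [h1]
        _ = ov x y := F6 x y
        _ = y := h1
    -- F11/F12 : monotonicity
    have F11 : ∀ a p u, inter p u = p → ov (ov a p) (ov a u) = ov a u := by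
      intro a p u hp
      calc ov (ov a p) (ov a u) = ov (ov (ov a p) a) u := (oa _ a u).symm
        _ = ov (ov a p) u := by rw [F6 a p]
        _ = ov a (ov p u) := oa a p u
        _ = ov a u := by rw [leow p u hp]
    have F12 : ∀ a p u, inter p u = p → inter (ov a p) (ov a u) = ov a p := by
      intro a p u hp
      exact owle _ _ (F11 a p u hp)
    -- F14 : a⊔u ≤ w → a⊔(u∩w) = a⊔u
    have F14 : ∀ a u w, inter (ov a u) w = ov a u → ov a (inter u w) = ov a u := by
      intro a u w hw
      have has : inter a (ov a u) = a := le1 a u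
      have haw : inter a w = a := by
        calc inter a w = inter (inter a (ov a u)) w := by rw [has]
          _ = inter a (inter (ov a u) w) := ma _ _ _
          _ = inter a (ov a u) := by rw [hw]
          _ = a := has
      have hd := dist a u (ov a u) w
      rw [haw, hw] at hd
      have e1 : inter (inter u w) (ov a u) = inter u (ov a u) := by
        rw [ma, mc w (ov a u), hw]
      have e3 : ov a (ov a u) = ov a u := leow a (ov a u) has
      rw [e1, F8 a u, e3] at hd
      have hle : inter (ov a u) (ov a (inter u w)) = ov a u := by
        rw [mc]; exact hd.symm
      have hpu : inter (inter u w) u = inter u w := by rw [mc u w, ma, mi]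
      have hb : ov (ov a (inter u w)) (ov a u) = ov a u := by
        calc ov (ov a (inter u w)) (ov a u) = ov (ov (ov a (inter u w)) a) u := (oa _ a u).symm
          _ = ov (ov a (inter u w)) u := by rw [F6 a (inter u w)]
          _ = ov a (ov (inter u w) u) := oa _ _ _
          _ = ov a u := by rw [leow (inter u w) u hpu]
      have hc : ov (ov a u) (ov a (inter u w)) = ov a (inter u w) := leow _ _ hle
      exact F9 (ov a (inter u w)) (ov a u) hb hc
    -- ACI helper
    have aci : ∀ x y r, inter (inter x r) (inter y r) = inter (inter x y) r := by
      intro x y r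
      rw [ma x r (inter y r), mc r (inter y r), ma y r r, mi r, ← ma x y r]
    -- key : a ≤ R → R ≤ a⊔b → a⊔(b∩R) = R
    have key : ∀ a b R, inter a R = a → inter R (ov a b) = R → ov a (inter b R) = R := by
      intro a b R haR hRt
      have hat := le1 a b
      have haRov : ov a R = R := leow a R haR
      have hd := dist a b R (ov a b)
      rw [hat, hRt] at hd
      have e1 : inter (inter b (ov a b)) R = inter b R := by
        rw [ma, mc (ov a b) R, hRt]
      rw [e1, F8 a b, haRov] at hd
      rw [hd, mc (ov a b) R]
      exact hRt
    -- F15 : distributivity  a⊔(b∩c) = (a⊔b)∩(a⊔c)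
    have F15 : ∀ a b c, ov a (inter b c) = inter (ov a b) (ov a c) := by
      intro a b c
      have hat : inter a (ov a b) = a := le1 a b
      have hat' : inter a (ov a c) = a := le1 a c
      have haR : inter a (inter (ov a b) (ov a c)) = a := by rw [← ma, hat, hat']
      have hRt : inter (inter (ov a b) (ov a c)) (ov a b) = inter (ov a b) (ov a c) := by
        rw [ma, mc (ov a c) (ov a b), ← ma, mi]
      have hRt' : inter (inter (ov a b) (ov a c)) (ov a c) = inter (ov a b) (ov a c) := by
        rw [ma, mi]
      have key1 := key a b _ haR hRt
      have key2 := key a c _ haR hRt'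
      have hd := dist a b c (inter (ov a b) (ov a c))
      rw [haR, key1, key2, mi] at hd
      rw [aci b c (inter (ov a b) (ov a c))] at hd
      have hbcb : inter (inter b c) b = inter b c := by rw [mc b c, ma, mi]
      have hbcc : inter (inter b c) c = inter b c := by rw [ma, mi]
      have m1 := F12 a (inter b c) b hbcb
      have m2 := F12 a (inter b c) c hbcc
      have key4 : inter (ov a (inter b c)) (inter (ov a b) (ov a c)) = ov a (inter b c) := by
        rw [← ma, m1, m2]
      have hfin := F14 a (inter b c) _ key4
      exact hfin.symm.trans hd
    refine ⟨⟨fun a b c => (oa a b c).symm, oidem, fun a b => (F6 a b).symm⟩, ?_, F15, ?_⟩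
    · intro a b
      refine ⟨?_, F2 a b, ?_⟩
      · have := F2 b a; rw [mc b a] at this; exact this
      · intro c hca hcb
        have h1 := owle c a hca
        have h2 := owle c b hcb
        exact leow c (inter a b) (by rw [← ma, h1, h2])
    · intro a b c
      exact leow (inter a c) (ov (inter a b) c) (le4 a b c)
  · rintro ⟨⟨oa, oi, oabs⟩, glb, dist3, h4⟩
    have B1 : ∀ x y, ov x y = y → ov y x = x → x = y := by
      intro x y h1 h2
      calc x = ov y x := h2.symm
        _ = ov (ov y x) y := oabs y x
        _ = ov x y := by rw [h2]
        _ = y := h1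
    have B0 : ∀ x y z, ov x y = y → ov y z = z → ov x z = z := by
      intro x y z hxy hyz
      rw [← hyz, oa, hxy]
    have glb1 : ∀ a b, ov (inter a b) a = a := fun a b => (glb a b).1
    have glb2 : ∀ a b, ov (inter a b) b = b := fun a b => (glb a b).2.1
    have glbP : ∀ a b c, ov c a = a → ov c b = b → ov c (inter a b) = inter a b :=
      fun a b c => (glb a b).2.2 c
    have idm : ∀ a, inter a a = a := by
      intro a
      exact B1 (inter a a) a (glb1 a a) (glbP a a a (oi a) (oi a))
    have mle_of_ole : ∀ p q, ov p q = q → inter p q = p := by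
      intro p q h
      exact B1 (inter p q) p (glb1 p q) (glbP p q p (oi p) h)
    have cm : ∀ a b, inter a b = inter b a := by
      intro a b
      exact B1 (inter a b) (inter b a)
        (glbP b a (inter a b) (glb2 a b) (glb1 a b))
        (glbP a b (inter b a) (glb2 b a) (glb1 b a))
    have asc : ∀ a b c, inter (inter a b) c = inter a (inter b c) := by
      intro a b c
      have hLab := glb1 (inter a b) c
      have hLc := glb2 (inter a b) c
      have hLa := B0 _ _ _ hLab (glb1 a b)
      have hLb := B0 _ _ _ hLab (glb2 a b)
      have hLbc := glbP b c _ hLb hLc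
      have hL := glbP a (inter b c) _ hLa hLbc
      have hRa := glb1 a (inter b c)
      have hRbc := glb2 a (inter b c)
      have hRb := B0 _ _ _ hRbc (glb1 b c)
      have hRc := B0 _ _ _ hRbc (glb2 b c)
      have hRab := glbP a b _ hRa hRb
      have hR := glbP (inter a b) c _ hRab hRc
      exact B1 _ _ hL hR
    have h0 : ∀ x y, ov x (ov x y) = ov x y := by
      intro x y; rw [oa, oi]
    refine ⟨cm, asc, idm, ?_, ?_, ?_, ?_, fun x y z => (oa x y z).symm,
      fun a b c d => dist3 (inter a d) (inter b d) (inter c d)⟩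
    · intro x y
      exact mle_of_ole x (ov x y) (h0 x y)
    · intro x y z
      apply mle_of_ole
      have hp : ov (inter x y) y = y := glb2 x y
      have hq : ov (inter y z) y = y := glb1 y z
      calc ov (ov (inter x y) (inter y z)) y = ov (inter x y) (ov (inter y z) y) := (oa _ _ _).symm
        _ = ov (inter x y) y := by rw [hq]
        _ = y := hp
    · intro x y
      have e : ov x (inter y (ov x y)) = ov x y := by
        rw [dist3 x y (ov x y), h0 x y, idm]
      rw [e, idm]
    · intro x y z
      exact mle_of_ole _ _ (h4 x y z)
end

section
/- In an ado-semilattice (S,⊔,∩), for all a, b ∈ S: a⊔b = b⊔a if and only if a and b have a common upper bound, i.e. there is c ∈ S with a ≤ c and b ≤ c (where x ≤ y means x = x∩y). -/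
/-- In an ado-semilattice, `a⊔b = b⊔a` iff `a` and `b` have a
common upper bound (where `x ≤ y` means `x = x∩y`). -/
theorem stmt_6 {S : Type*} (inter ov : S → S → S) (h : IsAdo inter ov) :
    ∀ a b, ov a b = ov b a ↔ ∃ c, inter a c = a ∧ inter b c = b := by
  intro a b
  constructor
  · intro hc
    refine ⟨ov a b, h.le1 a b, ?_⟩
    rw [hc]; exact h.le1 b a
  · rintro ⟨c, ha, hb⟩
    -- any common upper bound u of x,y satisfies (x⊔y)∩u = x⊔y
    have key : ∀ x y u, inter x u = x → inter y u = y →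
        inter (ov x y) u = ov x y := by
      intro x y u hx hy
      have := h.le2 x u y
      rwa [hx, h.inter_comm u y, hy] at this
    -- b ≤ a ⊔ b
    have hb1 : inter b (ov a b) = b := by
      have := h.le4 c a b
      rwa [h.inter_comm c b, hb, h.inter_comm c a, ha] at this
    -- a ≤ b ⊔ a
    have ha1 : inter a (ov b a) = a := by
      have := h.le4 c b a
      rwa [h.inter_comm c a, ha, h.inter_comm c b, hb] at this
    have h1 : inter (ov a b) (ov b a) = ov a b :=
      key a b (ov b a) ha1 (h.le1 b a)
    have h2 : inter (ov b a) (ov a b) = ov b a :=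
      key b a (ov a b) hb1 (h.le1 a b)
    rw [← h1, h.inter_comm, h2]
end

section
/- In an ado-semilattice (S,⊔,∩), the identity a∩((a∩b)⊔c) = a∩((a∩c)⊔b) holds for all a, b, c ∈ S. -/
/-- In an ado-semilattice, `a∩((a∩b)⊔c) = a∩((a∩c)⊔b)`. -/
theorem stmt_7 {S : Type*} (inter ov : S → S → S) (h : IsAdo inter ov) :
    ∀ a b c, inter a (ov (inter a b) c) = inter a (ov (inter a c) b) := by
  obtain ⟨ic, ia, ii, le1, le2, le3, le4, _oa, dist⟩ := h
  -- antisymmetry of the induced order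
  have antisymm : ∀ p q, inter p q = p → inter q p = q → p = q := by
    intro p q h1 h2
    rw [← h1, ic, h2]
  -- E1 : (u∩v)⊔v = v
  have E1 : ∀ u v, ov (inter u v) v = v := by
    intro u v
    apply antisymm
    · have h1 := le2 u v v
      rwa [ii] at h1
    · have h2 := le4 v u v
      rwa [ii, ic v u] at h2
  -- E3 : x⊔(y∩(x⊔y)) = x⊔y
  have E3 : ∀ x y, ov x (inter y (ov x y)) = ov x y := by
    intro x y
    apply antisymm
    · have h1 := le2 x (ov x y) y
      rwa [le1 x y, ic (ov x y) y] at h1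
    · exact le3 x y
  -- half of commutativity for elements below d
  have sub : ∀ d x y, inter x d = x → inter y d = y →
      inter (ov x y) (ov y x) = ov x y := by
    intro d x y hx hy
    have hx' : inter x (ov y x) = x := by
      have h4 := le4 d y x
      rwa [ic d x, hx, ic d y, hy] at h4
    have hy' : inter y (ov y x) = y := le1 y x
    have h2 := le2 x (ov y x) y
    rwa [hx', ic (ov y x) y, hy'] at h2
  -- commutativity of ⊔ for elements below a common d
  have comm : ∀ d x y, inter x d = x → inter y d = y → ov x y = ov y x := by
    intro d x y hx hy
    exact antisymm _ _ (sub d x y hx hy) (sub d y x hy hx)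
  -- x∩a = x for x = a∩b
  have meet_lower : ∀ a b, inter (inter a b) a = inter a b := by
    intro a b
    rw [ic, ← ia, ii]
  -- key lemma A : (a∩b)⊔(a∩c) = a∩((a∩b)⊔c)
  have lemA : ∀ a b c, ov (inter a b) (inter a c) = inter a (ov (inter a b) c) := by
    intro a b c
    set x := inter a b with hxdef
    set d := ov x c with hddef
    have hxd : inter x d = x := le1 x c
    -- (a∩d)∩(c∩d) = a∩c
    have h3 : inter (inter a d) (inter c d) = inter a c := by
      have hacd : inter (inter a c) d = inter a c := le4 a b c
      have habs : inter d (inter c d) = inter c d := by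
        rw [ic c d, ← ia d d c, ii]
      calc inter (inter a d) (inter c d)
          = inter a (inter d (inter c d)) := by rw [ia]
        _ = inter a (inter c d) := by rw [habs]
        _ = inter (inter a c) d := by rw [ia]
        _ = inter a c := hacd
    -- x ⊔ (a∩d) = a∩d
    have h4 : ov x (inter a d) = inter a d := by
      have hx : inter x (inter a d) = x := by
        rw [← ia, meet_lower a b, hxd]
      rw [← hx]
      exact E1 x (inter a d)
    -- x ⊔ (c∩d) = d
    have h5 : ov x (inter c d) = d := E3 x c
    have hD := dist x a c d
    rw [hxd, h3, h4, h5, ia, ii] at hD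
    exact hD
  intro a b c
  rw [← lemA a b c, ← lemA a c b]
  exact comm a (inter a b) (inter a c) (meet_lower a b) (meet_lower a c)
end

section
/- For all partial functions f, g ∈ Par(X,Y), the restricted union equals the intersection of the two overrides: f⋎g = (f⊔g) ∩ (g⊔f). -/
/- Partial functions from `X` to `Y` are modelled as maps `X → Option Y`
(equivalently, single-valued subsets of `X × Y`). -/

/-- Override: `f ⊔ g` agrees with `f` on `dom f` and with `g` on
`dom g \ dom f`. -/
def pOv {X Y : Type*} (f g : X → Option Y) : X → Option Y :=
  fun x => (f x).or (g x)

open Classical in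
/-- Intersection of graphs. -/
noncomputable def pInt {X Y : Type*} (f g : X → Option Y) : X → Option Y :=
  fun x => if f x = g x then f x else none

open Classical in
/-- Restricted union: the restriction of the relation `f ∪ g` to the points
where it is single-valued. -/
noncomputable def pRU {X Y : Type*} (f g : X → Option Y) : X → Option Y :=
  fun x =>
    if f x = none then g x
    else if g x = none then f x
    else if f x = g x then f x else none

open Classical in
lemma aux_stmt10 {Y : Type*} (a b : Option Y) :
    (if a = none then b else if b = none then a else if a = b then a else none) =
      (if a.or b = b.or a then a.or b else none) := by
  rcases a with _ | a <;> rcases b with _ | b <;> simp [Option.or]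

/-- For all partial functions `f, g ∈ Par(X,Y)`,
`f⋎g = (f⊔g) ∩ (g⊔f)`. -/
theorem stmt_10 {X Y : Type*} (f g : X → Option Y) :
    pRU f g = pInt (pOv f g) (pOv g f) := by
  funext x
  exact aux_stmt10 (f x) (g x)
end

section
/- For all sets X and Y, the set Par(X,Y) equipped with restricted union ⋎ is a ⋎-algebra: for partial functions f, g, the element f⋎(f⋎g) equals the override f⊔g, the derived operation ⊔ makes Par(X,Y) a left regular band, ⋎ is commutative and idempotent, (f⋎g)⊔(f⊔g) = f⊔g, f⊔(g⋎h) = (f⊔g)⋎(f⊔h), and the quasiequation d ≲ f, d ≲ g, d ≲ h, d ≲ f⋎g, d ≲ g⋎h ⟹ d ≲ f⋎h holds (where u ≲ v means v⊔u = v). -/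
/-- The derived override operation `a ⊔ b := a ⋎ (a ⋎ b)` of a `⋎`-operation. -/
def vsup {S : Type*} (v : S → S → S) (a b : S) : S := v a (v a b)

/-- A `⋎`-algebra: `⋎` is commutative and idempotent; the derived operation
`a⊔b := a⋎(a⋎b)` makes `S` a left regular band; `(a⋎b)⊔(a⊔b) = a⊔b`;
`a⊔(b⋎c) = (a⊔b)⋎(a⊔c)`; and, writing `d ≲ a` for `a⊔d = a`, the
quasiequation `d ≲ a, d ≲ b, d ≲ c, d ≲ a⋎b, d ≲ b⋎c ⟹ d ≲ a⋎c` holds. -/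
structure IsVeeAlgebra {S : Type*} (v : S → S → S) : Prop where
  comm : ∀ a b, v a b = v b a
  idem : ∀ a, v a a = a
  sup_assoc : ∀ a b c, vsup v a (vsup v b c) = vsup v (vsup v a b) c
  sup_idem : ∀ a, vsup v a a = a
  sup_lrb : ∀ a b, vsup v a b = vsup v (vsup v a b) a
  absorb : ∀ a b, vsup v (v a b) (vsup v a b) = vsup v a b
  distrib : ∀ a b c, vsup v a (v b c) = v (vsup v a b) (vsup v a c)
  quasi : ∀ a b c d, vsup v a d = a → vsup v b d = b → vsup v c d = c →
    vsup v (v a b) d = v a b → vsup v (v b c) d = v b c →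
    vsup v (v a c) d = v a c

open Classical in
noncomputable def ru {Y : Type*} (a b : Option Y) : Option Y :=
  if a = none then b else if b = none then a else if a = b then a else none

section
variable {Y : Type*}

lemma ru_comm (a b : Option Y) : ru a b = ru b a := by
  rcases a with _|a <;> rcases b with _|b <;> simp [ru] <;> split_ifs <;> simp_all

lemma ru_idem (a : Option Y) : ru a a = a := by
  rcases a with _|a <;> simp [ru]

noncomputable def rs (a b : Option Y) : Option Y := ru a (ru a b)

lemma rs_eq (a b : Option Y) : rs a b = a.or b := by
  rcases a with _|a <;> rcases b with _|b <;> simp [rs, ru] <;> split_ifs <;> simp_all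

lemma rs_assoc (a b c : Option Y) : rs a (rs b c) = rs (rs a b) c := by
  simp only [rs_eq]; rcases a with _|a <;> simp

lemma rs_idem (a : Option Y) : rs a a = a := by rcases a with _|a <;> simp [rs_eq]

lemma rs_lrb (a b : Option Y) : rs a b = rs (rs a b) a := by
  simp only [rs_eq]; rcases a with _|a <;> rcases b with _|b <;> simp

lemma rs_absorb (a b : Option Y) : rs (ru a b) (rs a b) = rs a b := by
  simp only [rs_eq]
  rcases a with _|a <;> rcases b with _|b <;> simp [ru] <;>
    first
    | exact em _
    | (split_ifs <;> simp_all)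

lemma rs_distrib (a b c : Option Y) : rs a (ru b c) = ru (rs a b) (rs a c) := by
  simp only [rs_eq]
  rcases a with _|a <;> rcases b with _|b <;> rcases c with _|c <;>
    simp [ru] <;> split_ifs <;> simp_all <;> tauto

lemma rs_quasi (a b c d : Option Y) (h1 : rs a d = a) (h2 : rs b d = b)
    (h3 : rs c d = c) (h4 : rs (ru a b) d = ru a b) (h5 : rs (ru b c) d = ru b c) :
    rs (ru a c) d = ru a c := by
  simp only [rs_eq] at *
  rcases a with _|a <;> rcases b with _|b <;> rcases c with _|c <;> rcases d with _|d <;>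
    simp_all [ru] <;> split_ifs at * <;> simp_all <;> tauto

end

/-- For all sets `X, Y`, the set `Par(X,Y)` of partial functions
equipped with restricted union `⋎` is a `⋎`-algebra, and the derived operation
`f⋎(f⋎g)` equals the override `f⊔g`. -/
theorem stmt_12 (X Y : Type*) :
    (∀ f g : X → Option Y, pRU f (pRU f g) = pOv f g) ∧
    IsVeeAlgebra (fun f g : X → Option Y => pRU f g) := by
  have hv : ∀ (f g : X → Option Y) x, pRU f g x = ru (f x) (g x) := fun f g x => rfl
  have hs : ∀ (f g : X → Option Y) x,
      vsup (fun f g : X → Option Y => pRU f g) f g x = rs (f x) (g x) := fun f g x => rfl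
  constructor
  · intro f g; funext x; exact rs_eq (f x) (g x)
  · constructor
    · intro a b; funext x; exact ru_comm _ _
    · intro a; funext x; exact ru_idem _
    · intro a b c; funext x
      simpa [hs, hv] using rs_assoc (a x) (b x) (c x)
    · intro a; funext x; simpa [hs] using rs_idem (a x)
    · intro a b; funext x; simpa [hs] using rs_lrb (a x) (b x)
    · intro a b; funext x; simpa [hs, hv] using rs_absorb (a x) (b x)
    · intro a b c; funext x; simpa [hs, hv] using rs_distrib (a x) (b x) (c x)
    · intro a b c d h1 h2 h3 h4 h5; funext x
      exact rs_quasi (a x) (b x) (c x) (d x) (congrFun h1 x) (congrFun h2 x)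
        (congrFun h3 x) (congrFun h4 x) (congrFun h5 x)
end

section
/- Let S be a flat ⋎-algebra, T any set with a binary operation ⋎', and ψ : S → T a map satisfying ψ(a⋎b) = ψ(a)⋎'ψ(b) for all a, b ∈ S. If ψ is not injective, then ψ is constant. Hence every flat ⋎-algebra is simple. -/
/-- Let `S` be a flat `⋎`-algebra (with bottom element `z`),
`T` any set with a binary operation `⋎'`, and `ψ : S → T` a homomorphism.
If `ψ` is not injective then `ψ` is constant.  Hence every flat `⋎`-algebra
is simple. -/
theorem stmt_14 {S T : Type*} (z : S) (v : S → S → S)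
    (hidem : ∀ a, v a a = a)
    (hzr : ∀ a, v a z = a)
    (hzl : ∀ a, v z a = a)
    (hflat : ∀ a b, a ≠ b → a ≠ z → b ≠ z → v a b = z)
    (v' : T → T → T) (ψ : S → T)
    (hom : ∀ a b, ψ (v a b) = v' (ψ a) (ψ b))
    (hninj : ¬ Function.Injective ψ) :
    ∀ a b, ψ a = ψ b := by
  -- Step 1: there is `c ≠ z` with `ψ c = ψ z`.
  have hc : ∃ c, c ≠ z ∧ ψ c = ψ z := by
    simp only [Function.Injective, not_forall] at hninj
    obtain ⟨x, y, hxy, hne⟩ := hninj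
    by_cases hxz : x = z
    · exact ⟨y, fun h => hne (h ▸ hxz), by rw [← hxz, hxy]⟩
    by_cases hyz : y = z
    · exact ⟨x, hxz, by rw [hxy, hyz]⟩
    · refine ⟨x, hxz, ?_⟩
      have h1 : ψ z = ψ (v x y) := by rw [hflat x y hne hxz hyz]
      rw [h1, hom, ← hxy, ← hom, hidem]
  obtain ⟨c, hcz, hcψ⟩ := hc
  -- Step 2: every value equals `ψ z`.
  have key : ∀ a, ψ a = ψ z := by
    intro a
    by_cases haz : a = z
    · rw [haz]
    by_cases hac : a = c
    · rw [hac, hcψ]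
    · have h1 : ψ z = v' (ψ a) (ψ z) := by
        calc ψ z = ψ (v a c) := by rw [hflat a c hac haz hcz]
        _ = v' (ψ a) (ψ c) := hom a c
        _ = v' (ψ a) (ψ z) := by rw [hcψ]
      have h2 : ψ a = v' (ψ a) (ψ z) := by rw [← hom, hzr]
      rw [h2, ← h1]
  intro a b
  rw [key a, key b]
end

section
/- In a ⋎-algebra S (with a⊔b := a⋎(a⋎b) and x ≲ y meaning y⊔x = y), for all a, b, c, d, i ∈ S: if d ≲ a⊔i, d ≲ b⊔i, d ≲ c⊔i, d ≲ (a⋎b)⊔i and d ≲ (b⋎c)⊔i, then d ≲ (a⋎c)⊔i. -/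
/-- Transitivity of `≲`. -/
theorem vle_trans {S : Type*} {v : S → S → S} (h : IsVeeAlgebra v) {x y z : S}
    (h1 : vsup v y x = y) (h2 : vsup v z y = z) : vsup v z x = z := by
  calc vsup v z x = vsup v (vsup v z y) x := by rw [h2]
    _ = vsup v z (vsup v y x) := (h.sup_assoc z y x).symm
    _ = vsup v z y := by rw [h1]
    _ = z := h2

/-- `y⊔x ≲ x⊔y`. -/
theorem vsup_swap {S : Type*} {v : S → S → S} (h : IsVeeAlgebra v) (x y : S) :
    vsup v (vsup v x y) (vsup v y x) = vsup v x y := by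
  calc vsup v (vsup v x y) (vsup v y x)
      = vsup v (vsup v (vsup v x y) y) x := by rw [h.sup_assoc]
    _ = vsup v (vsup v x (vsup v y y)) x := by rw [h.sup_assoc]
    _ = vsup v (vsup v x y) x := by rw [h.sup_idem]
    _ = vsup v x y := (h.sup_lrb x y).symm

/-- In a `⋎`-algebra (with `a⊔b := a⋎(a⋎b)` and `x ≲ y` meaning
`y⊔x = y`), if `d ≲ a⊔i`, `d ≲ b⊔i`, `d ≲ c⊔i`, `d ≲ (a⋎b)⊔i` and
`d ≲ (b⋎c)⊔i`, then `d ≲ (a⋎c)⊔i`. -/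
theorem stmt_15 {S : Type*} (v : S → S → S) (h : IsVeeAlgebra v) :
    ∀ a b c d i,
      vsup v (vsup v a i) d = vsup v a i →
      vsup v (vsup v b i) d = vsup v b i →
      vsup v (vsup v c i) d = vsup v c i →
      vsup v (vsup v (v a b) i) d = vsup v (v a b) i →
      vsup v (vsup v (v b c) i) d = vsup v (v b c) i →
      vsup v (vsup v (v a c) i) d = vsup v (v a c) i := by
  intro a b c d i ha hb hc hab hbc
  -- transfer the hypotheses to `i ⊔ x` form
  have ha' : vsup v (vsup v i a) d = vsup v i a :=
    vle_trans h ha (vsup_swap h i a)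
  have hb' : vsup v (vsup v i b) d = vsup v i b :=
    vle_trans h hb (vsup_swap h i b)
  have hc' : vsup v (vsup v i c) d = vsup v i c :=
    vle_trans h hc (vsup_swap h i c)
  have hab' : vsup v (v (vsup v i a) (vsup v i b)) d = v (vsup v i a) (vsup v i b) := by
    rw [← h.distrib]
    exact vle_trans h hab (vsup_swap h i (v a b))
  have hbc' : vsup v (v (vsup v i b) (vsup v i c)) d = v (vsup v i b) (vsup v i c) := by
    rw [← h.distrib]
    exact vle_trans h hbc (vsup_swap h i (v b c))
  have hac' := h.quasi (vsup v i a) (vsup v i b) (vsup v i c) d ha' hb' hc' hab' hbc'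
  rw [← h.distrib] at hac'
  exact vle_trans h hac' (vsup_swap h (v a c) i)
end

section
/- Let S be a ⋎-algebra and let I be a ≲-ideal of S relatively maximal with respect to not containing some d ∈ S. Define ε_I = (I×I) ∪ {(a,b) : a ∉ I, b ∉ I, a⋎b ∉ I}. Then ε_I is an equivalence relation on S compatible with ⋎ (i.e. a congruence), and the quotient S/ε_I is a flat ⋎-algebra with the class I as bottom element. Moreover, for any two distinct elements a, b ∈ S there exists a ≲-ideal I of S, relatively maximal with respect to not containing some element, such that (a,b) ∉ ε_I; hence S is a subdirect product of flat ⋎-algebras. -/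
universe u

/-- A `≲`-ideal of a `⋎`-algebra: a nonempty down-set under `≲` (where
`x ≲ y` means `y⊔x = y`) closed under `⊔`. -/
def IsIdeal {S : Type*} (v : S → S → S) (I : Set S) : Prop :=
  I.Nonempty ∧ (∀ a b, b ∈ I → vsup v b a = b → a ∈ I) ∧
    ∀ i j, i ∈ I → j ∈ I → vsup v i j ∈ I

/-- `I` is relatively maximal with respect to not containing `d`. -/
def RelMax {S : Type*} (v : S → S → S) (I : Set S) (d : S) : Prop :=
  IsIdeal v I ∧ d ∉ I ∧ ∀ J : Set S, IsIdeal v J → I ⊂ J → d ∈ J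

/-- The relation `ε_I = (I×I) ∪ {(a,b) : a ∉ I, b ∉ I, a⋎b ∉ I}`. -/
def epsRel {S : Type*} (v : S → S → S) (I : Set S) (a b : S) : Prop :=
  (a ∈ I ∧ b ∈ I) ∨ (a ∉ I ∧ b ∉ I ∧ v a b ∉ I)

namespace Stmt16Aux

/-- `x ≲ y`, i.e. `y ⊔ x = y`. -/
def sle {S : Type*} (v : S → S → S) (x y : S) : Prop := vsup v y x = y

variable {S : Type u} {v : S → S → S}

theorem sle_refl (h : IsVeeAlgebra v) (x : S) : sle v x x := h.sup_idem x

theorem sle_trans (h : IsVeeAlgebra v) {x y z : S} (hxy : sle v x y) (hyz : sle v y z) :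
    sle v x z := by
  unfold sle at *
  calc vsup v z x = vsup v (vsup v z y) x := by rw [hyz]
    _ = vsup v z (vsup v y x) := (h.sup_assoc z y x).symm
    _ = vsup v z y := by rw [hxy]
    _ = z := hyz

theorem sle_sup_left (h : IsVeeAlgebra v) (x y : S) : sle v x (vsup v x y) :=
  (h.sup_lrb x y).symm

theorem sle_sup_right (h : IsVeeAlgebra v) (x y : S) : sle v y (vsup v x y) := by
  unfold sle
  rw [← h.sup_assoc, h.sup_idem]

theorem sup_sle_sup (h : IsVeeAlgebra v) {s u : S} (t : S) (hsu : sle v s u) :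
    sle v (vsup v s t) (vsup v u t) := by
  have h1 : sle v s (vsup v u t) := sle_trans h hsu (sle_sup_left h u t)
  unfold sle at h1 ⊢
  calc vsup v (vsup v u t) (vsup v s t)
      = vsup v (vsup v (vsup v u t) s) t := h.sup_assoc _ s t
    _ = vsup v (vsup v u t) t := by rw [h1]
    _ = vsup v u (vsup v t t) := (h.sup_assoc u t t).symm
    _ = vsup v u t := by rw [h.sup_idem]

theorem sup_sle (h : IsVeeAlgebra v) {s t w : S} (hs : sle v s w) (ht : sle v t w) :
    sle v (vsup v s t) w := by
  unfold sle at *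
  rw [h.sup_assoc, hs, ht]

theorem sle_flip (h : IsVeeAlgebra v) {x y : S} (hxy : vsup v x y = y) : sle v x y := by
  unfold sle
  rw [← hxy]
  exact (h.sup_lrb x y).symm

theorem vee_sle_sup (h : IsVeeAlgebra v) (a b : S) : sle v (v a b) (vsup v a b) :=
  sle_flip h (h.absorb a b)

variable {I : Set S}

theorem ideal_down (hI : IsIdeal v I) {a b : S} (hb : b ∈ I) (hab : sle v a b) : a ∈ I :=
  hI.2.1 a b hb hab

theorem ideal_sup (hI : IsIdeal v I) {i j : S} (hi : i ∈ I) (hj : j ∈ I) : vsup v i j ∈ I :=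
  hI.2.2 i j hi hj

theorem ideal_vee (h : IsVeeAlgebra v) (hI : IsIdeal v I) {a b : S}
    (ha : a ∈ I) (hb : b ∈ I) : v a b ∈ I :=
  ideal_down hI (ideal_sup hI ha hb) (vee_sle_sup h a b)

/-- If `a ∈ I` and `a⋎c ∈ I` then `c ∈ I`. -/
theorem ideal_cancel (h : IsVeeAlgebra v) (hI : IsIdeal v I) {a c : S}
    (ha : a ∈ I) (hac : v a c ∈ I) : c ∈ I := by
  have h1 : vsup v a c ∈ I := ideal_vee h hI ha hac
  exact ideal_down hI h1 (sle_sup_right h a c)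

/-- If `x ∉ I` then `x ⊔ u = x⋎(x⋎u) ∉ I`. -/
theorem notmem_vsup (h : IsVeeAlgebra v) (hI : IsIdeal v I) {x : S} (hx : x ∉ I) (u : S) :
    vsup v x u ∉ I := fun hm => hx (ideal_down hI hm (sle_sup_left h x u))


/-- Relative maximality: any `x ∉ I` pushes `d` below some `i ⊔ x`. -/
theorem relmax_witness (h : IsVeeAlgebra v) {d : S} (hI : RelMax v I d) {x : S} (hx : x ∉ I) :
    ∃ i ∈ I, sle v d (vsup v i x) := by
  obtain ⟨i₀, hi₀⟩ := hI.1.1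
  have hJ : IsIdeal v {s | ∃ i ∈ I, sle v s (vsup v i x)} := by
    refine ⟨⟨x, i₀, hi₀, sle_sup_right h i₀ x⟩, ?_, ?_⟩
    · rintro a b ⟨i, hi, hb⟩ hab
      exact ⟨i, hi, sle_trans h hab hb⟩
    · rintro s t ⟨i, hi, hsi⟩ ⟨k, hk, htk⟩
      refine ⟨vsup v i k, ideal_sup hI.1 hi hk, sup_sle h ?_ ?_⟩
      · exact sle_trans h hsi (sup_sle_sup h x (sle_sup_left h i k))
      · exact sle_trans h htk (sup_sle_sup h x (sle_sup_right h i k))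
  have hsub : I ⊆ {s | ∃ i ∈ I, sle v s (vsup v i x)} := by
    intro i hi
    exact ⟨i, hi, sle_sup_left h i x⟩
  have hd : d ∈ {s | ∃ i ∈ I, sle v s (vsup v i x)} := by
    refine hI.2.2 _ hJ ((Set.ssubset_iff_of_subset hsub).mpr ?_)
    exact ⟨x, ⟨i₀, hi₀, sle_sup_right h i₀ x⟩, hx⟩
  exact hd

/-- Transitivity on the complement of `I`: the key use of the quasiequation. -/
theorem Rtrans (h : IsVeeAlgebra v) {d : S} (hI : RelMax v I d) {a b c : S}
    (ha : a ∉ I) (hb : b ∉ I) (hc : c ∉ I)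
    (hab : v a b ∉ I) (hbc : v b c ∉ I) : v a c ∉ I := by
  intro hac
  obtain ⟨i1, hi1, hd1⟩ := relmax_witness h hI ha
  obtain ⟨i2, hi2, hd2⟩ := relmax_witness h hI hb
  obtain ⟨i3, hi3, hd3⟩ := relmax_witness h hI hc
  obtain ⟨i4, hi4, hd4⟩ := relmax_witness h hI hab
  obtain ⟨i5, hi5, hd5⟩ := relmax_witness h hI hbc
  set j := vsup v (vsup v (vsup v (vsup v i1 i2) i3) i4) i5 with hjdef
  have hj : j ∈ I :=
    ideal_sup hI.1 (ideal_sup hI.1 (ideal_sup hI.1 (ideal_sup hI.1 hi1 hi2) hi3) hi4) hi5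
  have l4 : sle v (vsup v (vsup v (vsup v i1 i2) i3) i4) j := sle_sup_left h _ i5
  have l3 : sle v (vsup v (vsup v i1 i2) i3) j :=
    sle_trans h (sle_sup_left h _ i4) l4
  have l2 : sle v (vsup v i1 i2) j := sle_trans h (sle_sup_left h _ i3) l3
  have e1 : sle v i1 j := sle_trans h (sle_sup_left h i1 i2) l2
  have e2 : sle v i2 j := sle_trans h (sle_sup_right h i1 i2) l2
  have e3 : sle v i3 j := sle_trans h (sle_sup_right h _ i3) l3
  have e4 : sle v i4 j := sle_trans h (sle_sup_right h _ i4) l4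
  have e5 : sle v i5 j := sle_sup_right h _ i5
  have W : ∀ {i x : S}, sle v d (vsup v i x) → sle v i j → sle v d (vsup v j x) :=
    fun hd hij => sle_trans h hd (sup_sle_sup h _ hij)
  have da : sle v d (vsup v j a) := W hd1 e1
  have db : sle v d (vsup v j b) := W hd2 e2
  have dc : sle v d (vsup v j c) := W hd3 e3
  have dab : sle v d (vsup v j (v a b)) := W hd4 e4
  have dbc : sle v d (vsup v j (v b c)) := W hd5 e5
  unfold sle at dab dbc
  rw [h.distrib j a b] at dab
  rw [h.distrib j b c] at dbc
  have key := h.quasi (vsup v j a) (vsup v j b) (vsup v j c) d da db dc dab dbc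
  rw [← h.distrib j a c] at key
  have : d ∈ I := ideal_down hI.1 (ideal_sup hI.1 hj hac) key
  exact hI.2.1 this

/-- Principal down-set ideal. -/
theorem down_ideal (h : IsVeeAlgebra v) (x : S) : IsIdeal v {s | sle v s x} :=
  ⟨⟨x, sle_refl h x⟩, fun _ b hb hab => sle_trans h hab hb,
    fun _ _ hi hj => sup_sle h hi hj⟩

/-- Zorn: extend an ideal avoiding `d'` to a relatively maximal one. -/
theorem exists_relmax (h : IsVeeAlgebra v) {I₀ : Set S} (hI₀ : IsIdeal v I₀) {d' : S}
    (hd' : d' ∉ I₀) : ∃ I', I₀ ⊆ I' ∧ RelMax v I' d' := by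
  have hchainub : ∀ c ⊆ {J : Set S | IsIdeal v J ∧ d' ∉ J}, IsChain (· ⊆ ·) c →
      c.Nonempty → ∃ ub ∈ {J : Set S | IsIdeal v J ∧ d' ∉ J}, ∀ s ∈ c, s ⊆ ub := by
    rintro c hcS hchain ⟨s0, hs0⟩
    refine ⟨⋃₀ c, ⟨⟨?_, ?_, ?_⟩, ?_⟩, fun s hs => Set.subset_sUnion_of_mem hs⟩
    · obtain ⟨y, hy⟩ := (hcS hs0).1.1
      exact ⟨y, s0, hs0, hy⟩
    · rintro a b ⟨J, hJ, hbJ⟩ hab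
      exact ⟨J, hJ, (hcS hJ).1.2.1 a b hbJ hab⟩
    · rintro i k ⟨J1, hJ1, hiJ⟩ ⟨J2, hJ2, hkJ⟩
      rcases hchain.total hJ1 hJ2 with hle | hle
      · exact ⟨J2, hJ2, (hcS hJ2).1.2.2 i k (hle hiJ) hkJ⟩
      · exact ⟨J1, hJ1, (hcS hJ1).1.2.2 i k hiJ (hle hkJ)⟩
    · rintro ⟨J, hJ, hdJ⟩
      exact (hcS hJ).2 hdJ
  obtain ⟨m, hsub, hmax⟩ :=
    zorn_subset_nonempty {J : Set S | IsIdeal v J ∧ d' ∉ J} hchainub I₀ ⟨hI₀, hd'⟩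
  refine ⟨m, hsub, hmax.prop.1, hmax.prop.2, fun J hJ hmJ => ?_⟩
  by_contra hdJ
  exact absurd (hmax.2 ⟨hJ, hdJ⟩ hmJ.1) (by simpa using hmJ.2)

end Stmt16Aux

open Stmt16Aux

/-- Let `S` be a `⋎`-algebra and `I` a `≲`-ideal relatively
maximal with respect to not containing some `d ∈ S`.  Then `ε_I` is a
congruence (an equivalence relation compatible with `⋎`), and the quotient
`S/ε_I` is a flat `⋎`-algebra with the class `I` as bottom element (expressed
here by a surjective homomorphism `θ` onto a flat `⋎`-algebra `(T, w, z)`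
whose kernel is `ε_I` and which sends exactly `I` to the bottom `z`).
Moreover, for any two distinct `a, b ∈ S` there is a `≲`-ideal `I'`,
relatively maximal with respect to not containing some element `d'`, with
`(a,b) ∉ ε_{I'}`; hence `S` is a subdirect product of flat `⋎`-algebras. -/
theorem stmt_16 {S : Type u} (v : S → S → S) (h : IsVeeAlgebra v)
    (I : Set S) (d : S) (hI : RelMax v I d) :
    Equivalence (epsRel v I) ∧
    (∀ a b c e, epsRel v I a b → epsRel v I c e →
      epsRel v I (v a c) (v b e)) ∧
    (∃ (T : Type u) (w : T → T → T) (z : T) (θ : S → T),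
      Function.Surjective θ ∧
      (∀ a b, θ (v a b) = w (θ a) (θ b)) ∧
      (∀ a b, θ a = θ b ↔ epsRel v I a b) ∧
      (∀ a, θ a = z ↔ a ∈ I) ∧
      (∀ t, w t t = t) ∧ (∀ t, w t z = t) ∧ (∀ t, w z t = t) ∧
      (∀ s t, s ≠ t → s ≠ z → t ≠ z → w s t = z)) ∧
    (∀ a b : S, a ≠ b →
      ∃ (I' : Set S) (d' : S), RelMax v I' d' ∧ ¬ epsRel v I' a b) := by
  obtain ⟨i₀, hi₀⟩ := hI.1.1
  -- helper nonmembership facts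
  have hsupnot : ∀ {x : S}, x ∉ I → ∀ u, v x (v x u) ∉ I :=
    fun hx u => notmem_vsup h hI.1 hx u
  have hR1 : ∀ {x u : S}, x ∉ I → v (v x u) x ∉ I := by
    intro x u hx
    rw [h.comm (v x u) x]
    exact hsupnot hx u
  have hR2 : ∀ {x u : S}, x ∉ I → v (v u x) x ∉ I := by
    intro x u hx
    rw [h.comm u x]
    exact hR1 hx
  have hcancel' : ∀ {x c : S}, x ∈ I → v c x ∈ I → c ∈ I := by
    intro x c hx hcx
    rw [h.comm c x] at hcx
    exact ideal_cancel h hI.1 hx hcx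
  -- Equivalence
  have hEquiv : Equivalence (epsRel v I) := by
    constructor
    · intro a
      by_cases ha : a ∈ I
      · exact Or.inl ⟨ha, ha⟩
      · exact Or.inr ⟨ha, ha, by rwa [h.idem a]⟩
    · rintro a b (⟨h1, h2⟩ | ⟨h1, h2, h3⟩)
      · exact Or.inl ⟨h2, h1⟩
      · exact Or.inr ⟨h2, h1, by rwa [h.comm b a]⟩
    · rintro a b c (⟨h1, h2⟩ | ⟨h1, h2, h3⟩) (⟨h4, h5⟩ | ⟨h4, h5, h6⟩)
      · exact Or.inl ⟨h1, h5⟩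
      · exact absurd h2 h4
      · exact absurd h4 h2
      · exact Or.inr ⟨h1, h5, Rtrans h hI h1 h2 h5 h3 h6⟩
  -- Congruence
  have hCong : ∀ a b c e, epsRel v I a b → epsRel v I c e →
      epsRel v I (v a c) (v b e) := by
    rintro a b c e (⟨ha, hb⟩ | ⟨ha, hb, hab⟩) (⟨hc, he⟩ | ⟨hc, he, hce⟩)
    · exact Or.inl ⟨ideal_vee h hI.1 ha hc, ideal_vee h hI.1 hb he⟩
    · -- a, b ∈ I; c, e ∉ I, c⋎e ∉ I
      have hac : v a c ∉ I := fun hm => hc (ideal_cancel h hI.1 ha hm)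
      have hbe : v b e ∉ I := fun hm => he (ideal_cancel h hI.1 hb hm)
      refine Or.inr ⟨hac, hbe, ?_⟩
      have s1 : v (v a c) c ∉ I := hR2 hc
      have s2 : v (v a c) e ∉ I := Rtrans h hI hac hc he s1 hce
      have s3 : v e (v b e) ∉ I := by
        rw [h.comm e (v b e)]
        exact hR2 he
      exact Rtrans h hI hac he hbe s2 s3
    · -- a, b ∉ I (a⋎b ∉ I); c, e ∈ I
      have hac : v a c ∉ I := fun hm => ha (hcancel' hc hm)
      have hbe : v b e ∉ I := fun hm => hb (hcancel' he hm)
      refine Or.inr ⟨hac, hbe, ?_⟩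
      have s1 : v (v a c) a ∉ I := hR1 ha
      have s2 : v (v a c) b ∉ I := Rtrans h hI hac ha hb s1 hab
      have s3 : v b (v b e) ∉ I := hsupnot hb e
      exact Rtrans h hI hac hb hbe s2 s3
    · -- all outside I
      by_cases hac : v a c ∈ I
      · have hbe : v b e ∈ I := by
          by_contra hbe
          have s1 : v (v b e) b ∉ I := hR1 hb
          have hba : v b a ∉ I := by rwa [h.comm b a]
          have s2 : v (v b e) a ∉ I := Rtrans h hI hbe hb ha s1 hba
          have s3 : v (v b e) e ∉ I := hR2 he
          have hec : v e c ∉ I := by rwa [h.comm e c]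
          have s4 : v (v b e) c ∉ I := Rtrans h hI hbe he hc s3 hec
          have s5 : v a (v b e) ∉ I := by rwa [h.comm (v b e) a] at s2
          exact Rtrans h hI ha hbe hc s5 s4 hac
        exact Or.inl ⟨hac, hbe⟩
      · have s1 : v (v a c) a ∉ I := hR1 ha
        have s2 : v (v a c) b ∉ I := Rtrans h hI hac ha hb s1 hab
        have hbe : v b e ∉ I := by
          intro hbe
          have s3 : v (v a c) c ∉ I := hR2 hc
          have s4 : v (v a c) e ∉ I := Rtrans h hI hac hc he s3 hce
          have s5 : v b (v a c) ∉ I := by rwa [h.comm (v a c) b] at s2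
          exact Rtrans h hI hb hac he s5 s4 hbe
        refine Or.inr ⟨hac, hbe, ?_⟩
        have s3 : v b (v b e) ∉ I := hsupnot hb e
        exact Rtrans h hI hac hb hbe s2 s3
  -- class of `I` facts for the quotient
  have hEps0 : ∀ a : S, epsRel v I (v a i₀) a := by
    intro a
    by_cases ha : a ∈ I
    · exact Or.inl ⟨ideal_vee h hI.1 ha hi₀, ha⟩
    · refine Or.inr ⟨fun hm => ha (hcancel' hi₀ hm), ha, ?_⟩
      rw [h.comm (v a i₀) a]
      exact hsupnot ha i₀
  have hEpsI : ∀ a : S, epsRel v I a i₀ ↔ a ∈ I := by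
    intro a
    constructor
    · rintro (⟨h1, _⟩ | ⟨_, h2, _⟩)
      · exact h1
      · exact absurd hi₀ h2
    · exact fun ha => Or.inl ⟨ha, hi₀⟩
  refine ⟨hEquiv, hCong, ?_, ?_⟩
  · -- the quotient flat algebra
    let sd : Setoid S := ⟨epsRel v I, hEquiv⟩
    let θ : S → Quotient sd := Quotient.mk sd
    let w : Quotient sd → Quotient sd → Quotient sd := fun x y =>
      Quotient.liftOn₂ x y (fun a b => θ (v a b))
        (fun a₁ b₁ a₂ b₂ h1 h2 => Quotient.sound (hCong a₁ a₂ b₁ b₂ h1 h2))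
    have hker : ∀ a b : S, θ a = θ b ↔ epsRel v I a b := by
      intro a b
      exact ⟨fun hq => Quotient.exact hq, fun he => Quotient.sound he⟩
    refine ⟨Quotient sd, w, θ i₀, θ, ?_, fun a b => rfl, hker, ?_, ?_, ?_, ?_, ?_⟩
    · exact fun t => ⟨t.out, t.out_eq⟩
    · intro a
      exact (hker a i₀).trans (hEpsI a)
    · intro t
      refine Quotient.inductionOn t (fun a => ?_)
      show θ (v a a) = θ a
      rw [h.idem a]
    · intro t
      refine Quotient.inductionOn t (fun a => ?_)
      exact Quotient.sound (hEps0 a)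
    · intro t
      refine Quotient.inductionOn t (fun a => ?_)
      show θ (v i₀ a) = θ a
      rw [h.comm i₀ a]
      exact Quotient.sound (hEps0 a)
    · intro s t
      refine Quotient.inductionOn₂ s t (fun a b hst hsz htz => ?_)
      have hnab : ¬ epsRel v I a b := fun he => hst (Quotient.sound he)
      have ha : a ∉ I := fun ha => hsz ((hker a i₀).mpr ((hEpsI a).mpr ha))
      have hb : b ∉ I := fun hb => htz ((hker b i₀).mpr ((hEpsI b).mpr hb))
      have hab : v a b ∈ I := by
        by_contra hab
        exact hnab (Or.inr ⟨ha, hb, hab⟩)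
      exact Quotient.sound (Or.inl ⟨hab, hi₀⟩)
  · -- separation
    intro a b hab0
    by_cases h1 : sle v b a
    · by_cases h2 : sle v a b
      · by_cases h3 : sle v b (v a b)
        · by_cases h4 : sle v a (v a b)
          · exfalso
            apply hab0
            have hva : v a (v a b) = a := h1
            have hvb : v b (v a b) = b := by
              have h2' : v b (v b a) = b := h2
              rwa [h.comm b a] at h2'
            have hPa : v (v a b) a = a := by
              rw [h.comm (v a b) a]
              exact hva
            have hPb : v (v a b) b = b := by
              rw [h.comm (v a b) b]
              exact hvb
            have h4' : v (v a b) (v (v a b) a) = v a b := h4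
            rw [hPa, hPa] at h4'
            have h3' : v (v a b) (v (v a b) b) = v a b := h3
            rw [hPb, hPb] at h3'
            exact h4'.trans h3'.symm
          · obtain ⟨I', hsub, hI'⟩ := exists_relmax h (down_ideal h (v a b)) h4
            refine ⟨I', a, hI', ?_⟩
            have hp : v a b ∈ I' := hsub (sle_refl h (v a b))
            rintro (⟨haI, _⟩ | ⟨_, _, habI⟩)
            · exact hI'.2.1 haI
            · exact habI hp
        · obtain ⟨I', hsub, hI'⟩ := exists_relmax h (down_ideal h (v a b)) h3
          refine ⟨I', b, hI', ?_⟩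
          have hp : v a b ∈ I' := hsub (sle_refl h (v a b))
          rintro (⟨_, hbI⟩ | ⟨_, _, habI⟩)
          · exact hI'.2.1 hbI
          · exact habI hp
      · obtain ⟨I', hsub, hI'⟩ := exists_relmax h (down_ideal h b) h2
        refine ⟨I', a, hI', ?_⟩
        have hbmem : b ∈ I' := hsub (sle_refl h b)
        rintro (⟨haI, _⟩ | ⟨_, hbI, _⟩)
        · exact hI'.2.1 haI
        · exact hbI hbmem
    · obtain ⟨I', hsub, hI'⟩ := exists_relmax h (down_ideal h a) h1
      refine ⟨I', b, hI', ?_⟩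
      have hamem : a ∈ I' := hsub (sle_refl h a)
      rintro (⟨_, hbI⟩ | ⟨haI, _, _⟩)
      · exact hI'.2.1 hbI
      · exact haI hamem
end

section
/- An algebra (S,⋎) is a ⋎-algebra if and only if it is functional: there exist sets X and Y and an injective map φ : S → Par(X,Y) such that φ(a⋎b) = φ(a)⋎φ(b) for all a, b ∈ S, where ⋎ on Par(X,Y) is restricted union. Consequently, the class of functional algebras of signature (⋎) equals the class of ⋎-algebras, a finitely based quasivariety. -/
universe u

/-- `d` has smaller domain than `a`. -/
def VLe {S : Type*} (v : S → S → S) (d a : S) : Prop := vsup v a d = a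

namespace VeeRep

variable {S : Type u} {v : S → S → S}
variable (h : IsVeeAlgebra v)
include h

lemma le_refl (a : S) : VLe v a a := h.sup_idem a

lemma le_trans {d a b : S} (h1 : VLe v d a) (h2 : VLe v a b) : VLe v d b := by
  unfold VLe at *
  calc vsup v b d = vsup v (vsup v b a) d := by rw [h2]
    _ = vsup v b (vsup v a d) := (h.sup_assoc b a d).symm
    _ = vsup v b a := by rw [h1]
    _ = b := h2

lemma le_sup_left (x y : S) : VLe v x (vsup v x y) := (h.sup_lrb x y).symm

lemma sup_right_eq (x y : S) : vsup v (vsup v x y) y = vsup v x y := by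
  rw [← h.sup_assoc, h.sup_idem]

lemma le_sup_right (x y : S) : VLe v y (vsup v x y) := sup_right_eq h x y

lemma sup_le {x y z : S} (h1 : VLe v x z) (h2 : VLe v y z) : VLe v (vsup v x y) z := by
  unfold VLe at *
  rw [h.sup_assoc, h1, h2]

lemma le_sup_swap (x y : S) : VLe v (vsup v y x) (vsup v x y) :=
  sup_le h (le_sup_right h x y) (le_sup_left h x y)

lemma le_vee_sup (x y : S) : VLe v (v x y) (vsup v x y) := by
  unfold VLe
  rw [h.distrib (vsup v x y) x y, ← h.sup_lrb, sup_right_eq h, h.idem]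

lemma sup_absorb (x y : S) : vsup v x (vsup v x y) = vsup v x y := by
  rw [h.sup_assoc, h.sup_idem]

/-- E4: `x ⋎ (x ⊔ y) = x ⊔ y`. -/
lemma vee_sup_self (x y : S) : v x (vsup v x y) = vsup v x y := by
  set u := vsup v x y with hu
  set w := v x u with hwdef
  have hw1 : v x w = u := by
    show v x (v x u) = u
    exact sup_absorb h x y
  have hw2 : vsup v w u = u := by
    have := h.absorb x u
    rwa [sup_absorb h x y] at this
  have hw3 : vsup v u w = u := by
    have := h.sup_lrb w u
    rw [hw2] at this
    exact this.symm
  set t := v w u with htdef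
  have hw4 : v u t = u := by
    have : v u (v u w) = u := hw3
    rwa [h.comm u w] at this
  have hw5 : v w t = u := hw2
  have hw6 : vsup v w t = t := by
    show v w (v w t) = t
    rw [hw5]
  have hw7 : vsup v u t = t := by
    have := h.absorb w t
    rwa [hw5, hw6] at this
  have hw8 : vsup v u t = u := by
    show v u (v u t) = u
    rw [hw4]; exact h.idem u
  have htu : t = u := by rw [← hw7, hw8]
  have hx : vsup v w x = t := by
    show v w (v w x) = t
    rw [h.comm w x, hw1]
  have := h.distrib w x u
  rw [← hwdef, h.sup_idem, hx, hw2, htu, h.idem] at this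
  exact this

/-- D2: `y ⊔ (x ⋎ y) = y ⊔ x`. -/
lemma sup_vee_right (x y : S) : vsup v y (v x y) = vsup v y x := by
  have := h.distrib y x y
  rw [h.sup_idem y, h.comm (vsup v y x) y, vee_sup_self h y x] at this
  exact this

/-- B9: `x ≼ (x ⋎ y) ⊔ y`. -/
lemma le_vee_sup' (x y : S) : VLe v x (vsup v (v x y) y) := by
  have h1 : VLe v x (vsup v y x) := le_sup_right h y x
  have h2 : vsup v y (v x y) = vsup v y x := sup_vee_right h x y
  have h3 : VLe v (vsup v y (v x y)) (vsup v (v x y) y) := le_sup_swap h (v x y) y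
  exact le_trans h (h2 ▸ h1) h3

lemma antisymm3 {a b : S} (h1 : VLe v a b) (h2 : VLe v b a) (h3 : VLe v a (v a b)) :
    a = b := by
  have e1 : vsup v (v a b) a = a := by
    have := h.absorb a b
    rwa [show vsup v a b = a from h2] at this
  have e2 : vsup v (v a b) a = v a b := h3
  have hab : v a b = a := by rw [← e2, e1]
  have e3 : vsup v (v b a) b = b := by
    have := h.absorb b a
    rwa [show vsup v b a = b from h1] at this
  rw [h.comm b a, hab] at e3
  rw [← e3, h2]

end VeeRep

open Classical in
noncomputable def flat' {Y : Type*} (p q : Option Y) : Option Y :=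
  if p = none then q else if q = none then p else if p = q then p else none

namespace Pts

variable {S : Type u} {v : S → S → S}

def VPoint (v : S → S → S) (D : Set S) : Prop :=
  (∀ ⦃x y : S⦄, VLe v x y → x ∈ D → y ∈ D) ∧
  (∀ ⦃x y : S⦄, x ∉ D → y ∉ D → vsup v x y ∉ D) ∧
  (∀ ⦃x y z : S⦄, x ∈ D → y ∈ D → z ∈ D → v x y ∈ D → v y z ∈ D → v x z ∈ D)

open VeeRep

variable (h : IsVeeAlgebra v)
include h

lemma point_exists {a c : S} (hac : ¬ VLe v a c) :
    ∃ D : Set S, VPoint v D ∧ a ∈ D ∧ c ∉ D := by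
  classical
  set 𝒥 : Set (Set S) :=
    {I | (∀ ⦃x m : S⦄, VLe v x m → m ∈ I → x ∈ I) ∧
         (∀ ⦃m n : S⦄, m ∈ I → n ∈ I → vsup v m n ∈ I) ∧ a ∉ I} with h𝒥
  have h0 : {x | VLe v x c} ∈ 𝒥 :=
    ⟨fun x m hxm hm => le_trans h hxm hm, fun m n hm hn => sup_le h hm hn, hac⟩
  have hchainarg : ∀ ch ⊆ 𝒥, IsChain (· ⊆ ·) ch → ch.Nonempty →
      ∃ ub ∈ 𝒥, ∀ s ∈ ch, s ⊆ ub := by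
    intro ch hch hchain hne
    refine ⟨⋃₀ ch, ⟨?_, ?_, ?_⟩, fun s hs => Set.subset_sUnion_of_mem hs⟩
    · rintro x m hxm ⟨I, hI, hmI⟩
      exact ⟨I, hI, (hch hI).1 hxm hmI⟩
    · rintro m n ⟨I, hI, hmI⟩ ⟨J, hJ, hnJ⟩
      rcases hchain.total hI hJ with hIJ | hJI
      · exact ⟨J, hJ, (hch hJ).2.1 (hIJ hmI) hnJ⟩
      · exact ⟨I, hI, (hch hI).2.1 hmI (hJI hnJ)⟩
    · rintro ⟨I, hI, haI⟩
      exact (hch hI).2.2 haI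
  obtain ⟨M, hsub, hmax⟩ := zorn_subset_nonempty 𝒥 hchainarg _ h0
  have hM : M ∈ 𝒥 := hmax.prop
  have hcM : c ∈ M := hsub (le_refl h c)
  have key : ∀ w ∉ M, ∃ m ∈ M, VLe v a (vsup v w m) := by
    intro w hw
    by_contra hno
    push_neg at hno
    set J : Set S := {s | ∃ m ∈ M, VLe v s (vsup v w m)} with hJ
    have hJ𝒥 : J ∈ 𝒥 := by
      refine ⟨fun x m hxm hm => ?_, fun m n hm hn => ?_, fun ⟨m, hm, hle⟩ => hno m hm hle⟩
      · obtain ⟨m', hm', hle⟩ := hm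
        exact ⟨m', hm', le_trans h hxm hle⟩
      · obtain ⟨m1, hm1, hle1⟩ := hm
        obtain ⟨m2, hm2, hle2⟩ := hn
        refine ⟨vsup v m1 m2, hM.2.1 hm1 hm2, ?_⟩
        have e1 : VLe v (vsup v w m1) (vsup v w (vsup v m1 m2)) :=
          sup_le h (le_sup_left h _ _)
            (le_trans h (le_sup_left h m1 m2) (le_sup_right h w _))
        have e2 : VLe v (vsup v w m2) (vsup v w (vsup v m1 m2)) :=
          sup_le h (le_sup_left h _ _)
            (le_trans h (le_sup_right h m1 m2) (le_sup_right h w _))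
        exact sup_le h (le_trans h hle1 e1) (le_trans h hle2 e2)
    have hMJ : M ⊆ J := fun m hm => ⟨m, hm, le_sup_right h w m⟩
    have hwJ : w ∈ J := ⟨c, hcM, le_sup_left h w c⟩
    exact hw (hmax.2 hJ𝒥 hMJ hwJ)
  refine ⟨Mᶜ, ⟨?_, ?_, ?_⟩, hM.2.2, fun hc => hc hcM⟩
  · intro x y hxy hx hy
    exact hx (hM.1 hxy hy)
  · intro x y hx hy hxy
    simp only [Set.mem_compl_iff, not_not] at hx hy hxy
    exact hxy (hM.2.1 hx hy)
  · intro x y z hx hy hz hxy hyz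
    by_contra hxz
    simp only [Set.mem_compl_iff, not_not] at hxz
    obtain ⟨m1, hm1, k1⟩ := key x hx
    obtain ⟨m2, hm2, k2⟩ := key y hy
    obtain ⟨m3, hm3, k3⟩ := key z hz
    obtain ⟨m4, hm4, k4⟩ := key _ hxy
    obtain ⟨m5, hm5, k5⟩ := key _ hyz
    set m45 := vsup v m4 m5
    set m345 := vsup v m3 m45
    set m2345 := vsup v m2 m345
    set m := vsup v m1 m2345 with hm
    have hmM : m ∈ M := hM.2.1 hm1 (hM.2.1 hm2 (hM.2.1 hm3 (hM.2.1 hm4 hm5)))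
    have le1 : VLe v m1 m := le_sup_left h _ _
    have le2345 : VLe v m2345 m := le_sup_right h _ _
    have le2 : VLe v m2 m := le_trans h (le_sup_left h _ _) le2345
    have le345 : VLe v m345 m := le_trans h (le_sup_right h _ _) le2345
    have le3 : VLe v m3 m := le_trans h (le_sup_left h _ _) le345
    have le45 : VLe v m45 m := le_trans h (le_sup_right h _ _) le345
    have le4 : VLe v m4 m := le_trans h (le_sup_left h _ _) le45
    have le5 : VLe v m5 m := le_trans h (le_sup_right h _ _) le45
    have hcomb : ∀ {w mi : S}, VLe v a (vsup v w mi) → VLe v mi m →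
        VLe v a (vsup v m w) := by
      intro w mi hle hmi
      exact le_trans h hle (sup_le h (le_sup_right h m w)
        (le_trans h hmi (le_sup_left h m w)))
    have hax : VLe v a (vsup v m x) := hcomb k1 le1
    have hay : VLe v a (vsup v m y) := hcomb k2 le2
    have haz : VLe v a (vsup v m z) := hcomb k3 le3
    have haxy : VLe v a (v (vsup v m x) (vsup v m y)) := by
      rw [← h.distrib m x y]
      exact hcomb k4 le4
    have hayz : VLe v a (v (vsup v m y) (vsup v m z)) := by
      rw [← h.distrib m y z]
      exact hcomb k5 le5
    have hq := h.quasi (vsup v m x) (vsup v m y) (vsup v m z) a hax hay haz haxy hayz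
    rw [← h.distrib m x z] at hq
    have : a ∈ M := hM.1 hq (hM.2.1 hmM hxz)
    exact hM.2.2 this

end Pts

section FlatLemmas
open Classical
variable {Y : Type u}
lemma flat_none_left' (q : Option Y) : flat' none q = q := by simp [flat']
lemma flat_none_right' (p : Option Y) : flat' p none = p := by
  cases p <;> simp [flat']
lemma flat_some_some' (a b : Y) :
    flat' (some a) (some b) = if a = b then some a else none := by
  by_cases hab : a = b <;> simp [flat', hab]
lemma flat_idem' (p : Option Y) : flat' p p = p := by cases p <;> simp [flat']
end FlatLemmas

namespace Pts2

open VeeRep Pts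

variable {S : Type u}

open Classical in
noncomputable def VPhi (v : S → S → S) (a : S) (D : Set S) : Option (Set S) :=
  if VPoint v D ∧ a ∈ D then some {z | z ∈ D ∧ v a z ∈ D} else none

variable {v : S → S → S}

lemma vphi_pos {D : Set S} (hD : VPoint v D) {a : S} (ha : a ∈ D) :
    VPhi v a D = some {z | z ∈ D ∧ v a z ∈ D} := if_pos ⟨hD, ha⟩

lemma vphi_nm {D : Set S} {a : S} (ha : a ∉ D) : VPhi v a D = none :=
  if_neg (fun hh => ha hh.2)

lemma vphi_np {D : Set S} (hD : ¬ VPoint v D) (a : S) : VPhi v a D = none :=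
  if_neg (fun hh => hD hh.1)

variable (h : IsVeeAlgebra v)
include h

lemma ceq1 {D : Set S} (hD : VPoint v D) {a b : S} (ha : a ∈ D) (hb : b ∈ D)
    (hab : v a b ∈ D) :
    {z | z ∈ D ∧ v a z ∈ D} = {z | z ∈ D ∧ v b z ∈ D} := by
  have hba : v b a ∈ D := by rw [h.comm]; exact hab
  ext z
  simp only [Set.mem_setOf_eq]
  constructor
  · rintro ⟨hz, haz⟩
    exact ⟨hz, hD.2.2 hb ha hz hba haz⟩
  · rintro ⟨hz, hbz⟩
    exact ⟨hz, hD.2.2 ha hb hz hab hbz⟩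

lemma ceqA {D : Set S} (hD : VPoint v D) {a b : S} (ha : a ∈ D) (hab : v a b ∈ D) :
    {z | z ∈ D ∧ v (v a b) z ∈ D} = {z | z ∈ D ∧ v a z ∈ D} := by
  have hsab : v a (v a b) ∈ D := hD.1 (le_sup_left h a b) ha
  have hsab' : v (v a b) a ∈ D := by rw [h.comm]; exact hsab
  ext z
  simp only [Set.mem_setOf_eq]
  constructor
  · rintro ⟨hz, hvz⟩
    exact ⟨hz, hD.2.2 ha hab hz hsab hvz⟩
  · rintro ⟨hz, hvz⟩
    exact ⟨hz, hD.2.2 hab ha hz hsab' hvz⟩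

lemma vphi_hom (a b : S) (D : Set S) :
    VPhi v (v a b) D = flat' (VPhi v a D) (VPhi v b D) := by
  by_cases hD : VPoint v D
  · by_cases ha : a ∈ D <;> by_cases hb : b ∈ D
    · by_cases hab : v a b ∈ D
      · have e1 := ceqA h hD ha hab
        have e2 := ceq1 h hD ha hb hab
        rw [vphi_pos hD hab, vphi_pos hD ha, vphi_pos hD hb, e1, e2, flat_idem']
      · have hne : ({z | z ∈ D ∧ v a z ∈ D} : Set S) ≠ {z | z ∈ D ∧ v b z ∈ D} := by
          intro he
          have hbmem : b ∈ {z | z ∈ D ∧ v b z ∈ D} := ⟨hb, by rw [h.idem]; exact hb⟩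
          rw [← he] at hbmem
          exact hab hbmem.2
        rw [vphi_nm hab, vphi_pos hD ha, vphi_pos hD hb, flat_some_some', if_neg ?_]
        intro he
        exact hne he
    · have hab : v a b ∈ D := by
        by_contra hab
        exact (hD.2.1 hab hb) (hD.1 (le_vee_sup' h a b) ha)
      rw [vphi_pos hD hab, vphi_pos hD ha, vphi_nm hb, flat_none_right', ceqA h hD ha hab]
    · have hba : v b a ∈ D := by
        by_contra hba
        exact (hD.2.1 hba ha) (hD.1 (le_vee_sup' h b a) hb)
      have hab : v a b ∈ D := by rw [h.comm]; exact hba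
      have e1 : {z | z ∈ D ∧ v (v a b) z ∈ D} = {z | z ∈ D ∧ v b z ∈ D} := by
        rw [h.comm a b]
        exact ceqA h hD hb hba
      rw [vphi_pos hD hab, vphi_nm ha, vphi_pos hD hb, flat_none_left', e1]
    · have hab : v a b ∉ D := by
        intro hab
        exact hD.2.1 ha hb (hD.1 (le_vee_sup h a b) hab)
      rw [vphi_nm hab, vphi_nm ha, vphi_nm hb, flat_none_left']
  · rw [vphi_np hD, vphi_np hD, vphi_np hD, flat_none_left']

lemma vphi_injective : Function.Injective (fun a : S => VPhi v a) := by
  intro a b hab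
  simp only at hab
  by_cases h1 : VLe v a b
  · by_cases h2 : VLe v b a
    · by_cases h3 : VLe v a (v a b)
      · exact antisymm3 h h1 h2 h3
      · obtain ⟨D, hD, haD, hvD⟩ := point_exists h h3
        have hbD : b ∈ D := hD.1 h1 haD
        have hDeq := congrFun hab D
        rw [vphi_pos hD haD, vphi_pos hD hbD] at hDeq
        have hset := Option.some.inj hDeq
        have hbmem : b ∈ {z | z ∈ D ∧ v b z ∈ D} := ⟨hbD, by rw [h.idem]; exact hbD⟩
        rw [← hset] at hbmem
        exact absurd hbmem.2 hvD
    · obtain ⟨D, hD, hbD, haD⟩ := point_exists h h2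
      have hDeq := congrFun hab D
      rw [vphi_pos hD hbD, vphi_nm haD] at hDeq
      simp at hDeq
  · obtain ⟨D, hD, haD, hbD⟩ := point_exists h h1
    have hDeq := congrFun hab D
    rw [vphi_pos hD haD, vphi_nm hbD] at hDeq
    simp at hDeq

end Pts2


section FlatLemmas2
open Classical
variable {Y : Type u}
lemma flat_comm' (p q : Option Y) : flat' p q = flat' q p := by
  cases p <;> cases q <;> simp [flat']
  rename_i a b; by_cases hab : a = b
  · simp [hab]
  · rw [if_neg hab, if_neg (fun h => hab h.symm)]
lemma flat_flat' (p q : Option Y) : flat' p (flat' p q) = p.or q := by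
  cases p with
  | none => simp [flat']
  | some a =>
    cases q with
    | none => simp [flat']
    | some b =>
      by_cases hab : a = b <;> simp [flat', hab, Option.or]
lemma or_lrb' (p q : Option Y) : (p.or q).or p = p.or q := by
  cases p <;> cases q <;> simp
lemma flat_or_absorb' (p q : Option Y) : (flat' p q).or (p.or q) = p.or q := by
  cases p <;> cases q <;> simp [flat']
  rename_i a b; by_cases hab : a = b <;> simp [hab]
lemma flat_distrib' (p q r : Option Y) : p.or (flat' q r) = flat' (p.or q) (p.or r) := by
  cases p <;> cases q <;> cases r <;> simp [flat']
lemma flat_quasi' {p q r d : Option Y} (h1 : p.or d = p) (h2 : q.or d = q)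
    (h3 : r.or d = r) (h4 : (flat' p q).or d = flat' p q)
    (h5 : (flat' q r).or d = flat' q r) : (flat' p r).or d = flat' p r := by
  cases d with
  | none => simp
  | some y =>
    cases p with
    | none => simp at h1
    | some a =>
      cases q with
      | none => simp at h2
      | some b =>
        cases r with
        | none => simp at h3
        | some c =>
          by_cases hab : a = b
          · by_cases hbc : b = c
            · subst hab; subst hbc; rw [flat_some_some', if_pos rfl]; exact h1
            · rw [flat_some_some', if_neg hbc] at h5; simp at h5
          · rw [flat_some_some', if_neg hab] at h4; simp at h4
end FlatLemmas2

/-- An algebra `(S,⋎)` is a `⋎`-algebra iff it is functional: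
there exist sets `X, Y` and an injective map `φ : S → Par(X,Y)` with
`φ(a⋎b) = φ(a)⋎φ(b)`, where `⋎` on `Par(X,Y)` is restricted union.  Hence the
class of functional algebras of signature `(⋎)` equals the class of
`⋎`-algebras. -/
theorem stmt_17 {S : Type u} (v : S → S → S) :
    IsVeeAlgebra v ↔
      ∃ (X Y : Type u) (φ : S → X → Option Y),
        Function.Injective φ ∧ ∀ a b, φ (v a b) = pRU (φ a) (φ b) := by
  constructor
  · intro h
    refine ⟨Set S, Set S, fun a => Pts2.VPhi v a, Pts2.vphi_injective h, ?_⟩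
    intro a b
    funext D
    exact Pts2.vphi_hom h a b D
  · rintro ⟨X, Y, φ, hinj, hhom⟩
    have hap : ∀ (f g : X → Option Y) (x : X), pRU f g x = flat' (f x) (g x) :=
      fun _ _ _ => rfl
    have hsup : ∀ (a b : S) (x : X), φ (vsup v a b) x = (φ a x).or (φ b x) := by
      intro a b x
      show φ (v a (v a b)) x = _
      rw [hhom, hap, hhom, hap, flat_flat']
    refine ⟨?_, ?_, ?_, ?_, ?_, ?_, ?_, ?_⟩
    · intro a b
      apply hinj
      rw [hhom, hhom]
      funext x
      rw [hap, hap, flat_comm']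
    · intro a
      apply hinj
      rw [hhom]
      funext x
      rw [hap, flat_idem']
    · intro a b c
      apply hinj
      funext x
      rw [hsup, hsup, hsup, hsup, Option.or_assoc]
    · intro a
      apply hinj
      funext x
      rw [hsup, Option.or_self]
    · intro a b
      apply hinj
      funext x
      rw [hsup, hsup, hsup, or_lrb']
    · intro a b
      apply hinj
      funext x
      rw [hsup, hsup, hhom, hap, flat_or_absorb']
    · intro a b c
      apply hinj
      funext x
      rw [hsup, hhom, hap, hhom, hap, hsup, hsup, flat_distrib']
    · intro a b c d h1 h2 h3 h4 h5
      apply hinj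
      funext x
      have e1 : (φ a x).or (φ d x) = φ a x := by
        have := congrFun (congrArg φ h1) x
        rwa [hsup] at this
      have e2 : (φ b x).or (φ d x) = φ b x := by
        have := congrFun (congrArg φ h2) x
        rwa [hsup] at this
      have e3 : (φ c x).or (φ d x) = φ c x := by
        have := congrFun (congrArg φ h3) x
        rwa [hsup] at this
      have e4 : (flat' (φ a x) (φ b x)).or (φ d x) = flat' (φ a x) (φ b x) := by
        have := congrFun (congrArg φ h4) x
        rwa [hsup, hhom, hap] at this
      have e5 : (flat' (φ b x) (φ c x)).or (φ d x) = flat' (φ b x) (φ c x) := by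
        have := congrFun (congrArg φ h5) x
        rwa [hsup, hhom, hap] at this
      show φ (vsup v (v a c) d) x = φ (v a c) x
      rw [hsup, hhom, hap]
      exact flat_quasi' e1 e2 e3 e4 e5
end
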